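/- arXiv:1302.6427 — 2 statements merged into one kernel-verified Lean document; each statement's English description precedes it below -/
import Mathlib

section
/- Let X be a real random variable with distribution function 𝔽, let X₁,…,X_n be i.i.d. copies of X, let 0 < q < 1, and suppose ξ < ξ_q (the q-quantile). Set δ₂ = q − 𝔽(ξ). Then the empirical quantile ξ̂_q satisfies: (i) ℙⁿ(ξ̂_q < ξ) ≤ exp(−2nδ₂²); (ii) ℙⁿ(ξ̂_q < ξ) ≤ exp(−nδ₂²/(2𝔽(ξ) + (2/3)δ₂)); (iii) ℙⁿ(ξ̂_q < ξ) ≤ exp(−nδ₂²/(2(1 − 𝔽(ξ)))). -/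
/-!
On the event `ξ̂_q < ξ` at least `q n` of the samples lie in `(-∞, ξ]`, so the event lies in the
upper tail of a binomial count with success probability `p = 𝔽(ξ)`, and `p < q` because
`ξ < ξ_q`. Chernoff's bound controls that tail by `exp (n (s - t q))` as soon as the Bernoulli
moment generating function `1 + p (eᵗ - 1)` is at most `eˢ`. The three bounds come from three
estimates of it: Hoeffding's lemma at `t = 4 δ₂`; `1 + x ≤ eˣ` together with
`eᵗ - 1 - t ≤ t² / (2 (1 - t / 3))` at `t = 3 δ₂ / (3 p + δ₂)`; and
`e⁻ᵗ ≤ 1 - t + t² / 2`, applied to the complementary probability `1 - p`, at `t = δ₂ / (1 - p)`.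
-/

open MeasureTheory Real

/-- The distribution function `𝔽(ξ) = ℙ(X ≤ ξ)` of a law `μ` on `ℝ`. -/
noncomputable def distFun (μ : MeasureTheory.Measure ℝ) (ξ : ℝ) : ℝ :=
  (μ (Set.Iic ξ)).toReal

/-- The `q`-quantile `ξ_q = inf {ξ : 𝔽(ξ) ≥ q}`. -/
noncomputable def quantile (μ : MeasureTheory.Measure ℝ) (q : ℝ) : ℝ :=
  sInf {ξ : ℝ | q ≤ distFun μ ξ}

/-- The empirical distribution function of the samples `ω : Fin n → ℝ`. -/
noncomputable def empDistFun {n : ℕ} (ω : Fin n → ℝ) (ξ : ℝ) : ℝ :=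
  ((Finset.univ.filter fun i => ω i ≤ ξ).card : ℝ) / n

/-- The empirical `q`-quantile `ξ̂_q = inf {ξ : 𝔽_n(ξ) ≥ q}`. -/
noncomputable def empQuantile {n : ℕ} (ω : Fin n → ℝ) (q : ℝ) : ℝ :=
  sInf {ξ : ℝ | q ≤ empDistFun ω ξ}

open ProbabilityTheory Finset

namespace Real

lemma exp_neg_le_one_sub_add_sq_div_two {x : ℝ} (hx : 0 ≤ x) :
    exp (-x) ≤ 1 - x + x ^ 2 / 2 := by
  have hderiv (y : ℝ) :
      HasDerivAt (fun y ↦ 1 - y + y ^ 2 / 2 - exp (-y)) (-1 + y + exp (-y)) y := by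
    refine ((((hasDerivAt_const y 1).sub (hasDerivAt_id' y)).add
      ((hasDerivAt_pow 2 y).div_const 2)).sub (hasDerivAt_neg' y).exp).congr_deriv ?_
    ring
  have := monotone_of_hasDerivAt_nonneg hderiv
    (fun y ↦ show 0 ≤ -1 + y + exp (-y) by linarith [add_one_le_exp (-y)]) hx
  simp only [neg_zero, exp_zero] at this
  linarith

lemma six_sub_two_mul_mul_exp_le {x : ℝ} (hx : 0 ≤ x) :
    (6 - 2 * x) * exp x ≤ 6 + 4 * x + x ^ 2 := by
  have hderiv (y : ℝ) : HasDerivAt (fun y ↦ (6 + 4 * y + y ^ 2) * exp (-y) + 2 * y)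
      (2 - (2 + 2 * y + y ^ 2) * exp (-y)) y := by
    refine (((((hasDerivAt_id' y).const_mul 4).const_add 6).add (hasDerivAt_pow 2 y)).mul
      (hasDerivAt_neg' y).exp |>.add ((hasDerivAt_id' y).const_mul 2)).congr_deriv ?_
    simp only [Pi.add_apply]
    ring
  have hmono : MonotoneOn (fun y ↦ (6 + 4 * y + y ^ 2) * exp (-y) + 2 * y) (Set.Ici 0) := by
    refine monotoneOn_of_hasDerivWithinAt_nonneg (convex_Ici 0) (by fun_prop)
      (fun y _ ↦ (hderiv y).hasDerivWithinAt) fun y hy ↦ ?_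
    rw [interior_Ici] at hy
    have := quadratic_le_exp_of_nonneg (le_of_lt hy)
    have h2 : (2 + 2 * y + y ^ 2) * exp (-y) ≤ 2 := by
      rw [← le_div_iff₀ (exp_pos _), exp_neg, div_inv_eq_mul]
      linarith
    linarith
  have := hmono Set.self_mem_Ici hx hx
  have h : 6 - 2 * x ≤ (6 + 4 * x + x ^ 2) * exp (-x) := by
    norm_num at this
    linarith
  calc (6 - 2 * x) * exp x ≤ (6 + 4 * x + x ^ 2) * exp (-x) * exp x := by gcongr
    _ = 6 + 4 * x + x ^ 2 := by rw [mul_assoc, ← exp_add, neg_add_cancel, exp_zero, mul_one]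

end Real

lemma one_add_mul_exp_sub_one_le {p t : ℝ} (hp1 : p ≤ 1) (ht : 0 ≤ t) :
    1 + p * (exp t - 1) ≤ exp (t - (1 - p) * (t - t ^ 2 / 2)) := by
  calc 1 + p * (exp t - 1) = exp t * (-((1 - p) * (1 - exp (-t))) + 1) := by
        rw [exp_neg]; field_simp; ring
    _ ≤ exp t * exp (-((1 - p) * (1 - exp (-t)))) := by gcongr; exact add_one_le_exp _
    _ ≤ exp t * exp (-((1 - p) * (t - t ^ 2 / 2))) := by
        gcongr exp t * exp (-((1 - p) * ?_))
        linarith [exp_neg_le_one_sub_add_sq_div_two ht]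
    _ = exp (t - (1 - p) * (t - t ^ 2 / 2)) := by rw [← exp_add]; ring_nf

lemma mul_exp_sub_one_sub_le {p δ t : ℝ} (hp : 0 ≤ p) (hδ : 0 < δ)
    (ht : t * (3 * p + δ) = 3 * δ) :
    p * (exp t - 1) - t * (p + δ) ≤ -δ ^ 2 / (2 * p + 2 / 3 * δ) := by
  have ht0 : 0 < t := by nlinarith
  have hrhs : -δ ^ 2 / (2 * p + 2 / 3 * δ) = -(t * δ / 2) := by
    rw [div_eq_iff (by positivity)]
    linear_combination (δ / 3) * ht
  have hbernstein : δ * ((6 - 2 * t) * exp t) ≤ δ * (6 + 4 * t + t ^ 2) :=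
    mul_le_mul_of_nonneg_left (six_sub_two_mul_mul_exp_le ht0.le) hδ.le
  rw [hrhs]
  refine le_of_mul_le_mul_right ?_ (by positivity : 0 < 6 * t)
  linear_combination hbernstein + (2 * (exp t - 1 - t)) * ht

lemma Set.indicator_one_mem_Icc {α : Type*} (s : Set α) (x : α) :
    s.indicator (1 : α → ℝ) x ∈ Set.Icc 0 1 := by
  by_cases hx : x ∈ s <;> simp [hx]

section Chernoff

variable {α : Type*} [MeasurableSpace α] (μ : Measure α) [IsProbabilityMeasure μ]

lemma mgf_indicator_one {s : Set α} (hs : MeasurableSet s) (t : ℝ) :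
    mgf (s.indicator 1) μ t = 1 + μ.real s * (exp t - 1) := by
  have h : (fun x ↦ exp (t * s.indicator 1 x)) = fun x ↦ 1 + s.indicator (fun _ ↦ exp t - 1) x := by
    ext x
    by_cases hx : x ∈ s <;> simp [hx]
  rw [mgf, h, integral_add (integrable_const _) ((integrable_const _).indicator hs),
    integral_indicator_const _ hs]
  simp

lemma mgf_indicator_one_le_exp {s : Set α} (hs : MeasurableSet s) (t : ℝ) :
    mgf (s.indicator 1) μ t ≤ exp (t * μ.real s + t ^ 2 / 8) := by
  have hX : Measurable (s.indicator (1 : α → ℝ)) := measurable_const.indicator hs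
  have hoeffding := (hasSubgaussianMGF_of_mem_Icc (μ := μ) hX.aemeasurable
    (ae_of_all _ s.indicator_one_mem_Icc)).mgf_le t
  rw [integral_indicator_one hs] at hoeffding
  calc mgf (s.indicator 1) μ t
      = mgf (fun x ↦ s.indicator 1 x - μ.real s) μ t * exp (t * μ.real s) := by
        rw [← mgf_add_const]; simp
    _ ≤ exp (t ^ 2 / 8) * exp (t * μ.real s) := by
        gcongr
        refine hoeffding.trans_eq ?_
        norm_num
        ring
    _ = exp (t * μ.real s + t ^ 2 / 8) := by rw [← exp_add, add_comm]

variable {ι : Type*} [Fintype ι]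

lemma mgf_sum_pi {f : α → ℝ} (hf : Measurable f) (t : ℝ) :
    mgf (fun ω : ι → α ↦ ∑ i, f (ω i)) (Measure.pi fun _ ↦ μ) t = mgf f μ t ^ Fintype.card ι := by
  have hindep := iIndepFun_pi (μ := fun _ : ι ↦ μ) (X := fun _ ↦ f) fun _ ↦ hf.aemeasurable
  have hsum := hindep.mgf_sum (t := t) (fun i ↦ hf.comp (measurable_pi_apply i)) univ
  have hmarg (i : ι) : mgf (fun ω : ι → α ↦ f (ω i)) (Measure.pi fun _ ↦ μ) t = mgf f μ t := by
    have hmap := mgf_map (μ := Measure.pi fun _ ↦ μ) (Y := fun ω : ι → α ↦ ω i) (X := f) (t := t)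
      (measurable_pi_apply i).aemeasurable (by fun_prop)
    rwa [(measurePreserving_eval (fun _ ↦ μ) i).map_eq, eq_comm] at hmap
  rw [Finset.sum_fn] at hsum
  simp [hsum, hmarg]

lemma measureReal_le_sum_pi_le {f : α → ℝ} (hf : Measurable f) (a : ℝ) {t : ℝ} (ht : 0 ≤ t)
    (hint : Integrable (fun x ↦ exp (t * f x)) μ) :
    (Measure.pi fun _ : ι ↦ μ).real {ω | a ≤ ∑ i, f (ω i)} ≤
      exp (-t * a) * mgf f μ t ^ Fintype.card ι := by
  rw [← mgf_sum_pi μ hf t]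
  refine measure_ge_le_exp_mul_mgf a ht ?_
  rw [← mgf_pos_iff, mgf_sum_pi μ hf t]
  exact pow_pos (mgf_pos hint) _

end Chernoff

lemma distFun_eq_cdf (μ : Measure ℝ) [IsProbabilityMeasure μ] : distFun μ = cdf μ := by
  ext ξ
  rw [cdf_eq_real]
  rfl

lemma distFun_lt_of_lt_quantile (μ : Measure ℝ) [IsProbabilityMeasure μ] {q ξ : ℝ} (hq : 0 < q)
    (hξ : ξ < quantile μ q) : distFun μ ξ < q := by
  rw [quantile, distFun_eq_cdf] at hξ
  rw [distFun_eq_cdf]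
  by_contra! h
  obtain ⟨x, hx⟩ := ((tendsto_cdf_atBot μ).eventually (gt_mem_nhds hq)).exists
  have hbdd : BddBelow {y | q ≤ cdf μ y} :=
    ⟨x, fun y hy ↦ ((monotone_cdf μ).reflect_lt (hx.trans_le hy)).le⟩
  exact hξ.not_ge (csInf_le hbdd h)

lemma empDistFun_mono {n : ℕ} (ω : Fin n → ℝ) : Monotone (empDistFun ω) := by
  intro a b hab
  unfold empDistFun
  gcongr

lemma le_card_filter_of_empQuantile_lt {n : ℕ} {ω : Fin n → ℝ} {q ξ : ℝ} (hq : q ≤ 1)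
    (h : empQuantile ω q < ξ) : q * n ≤ #{i | ω i ≤ ξ} := by
  rcases n.eq_zero_or_pos with rfl | hn
  · simp
  -- needed because of the junk value `sInf ∅ = 0`, which would make `h` carry no information
  have hne : {y | q ≤ empDistFun ω y}.Nonempty := by
    obtain ⟨M, hM⟩ := (univ.image ω).exists_le
    refine ⟨M, hq.trans_eq ?_⟩
    rw [empDistFun, filter_true_of_mem fun i _ ↦ hM _ (mem_image_of_mem ω (mem_univ i))]
    simp [hn.ne']
  obtain ⟨y, hy, hyξ⟩ := exists_lt_of_csInf_lt hne h
  have := hy.trans (empDistFun_mono ω hyξ.le)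
  rwa [empDistFun, le_div_iff₀ (by positivity)] at this

theorem measureReal_empQuantile_lt_le_exp (μ : Measure ℝ) [IsProbabilityMeasure μ] (n : ℕ)
    {q ξ t s : ℝ} (hq : q ≤ 1) (ht : 0 ≤ t) (hmgf : mgf ((Set.Iic ξ).indicator 1) μ t ≤ exp s) :
    ((Measure.pi fun _ : Fin n ↦ μ) {ω | empQuantile ω q < ξ}).toReal ≤
      exp (n * (s - t * q)) := by
  have hf : Measurable ((Set.Iic ξ).indicator (1 : ℝ → ℝ)) :=
    measurable_const.indicator measurableSet_Iic
  have hcount (ω : Fin n → ℝ) : ∑ i, (Set.Iic ξ).indicator 1 (ω i) = (#{i | ω i ≤ ξ} : ℝ) := by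
    simp [Set.indicator_apply]
  calc ((Measure.pi fun _ : Fin n ↦ μ) {ω | empQuantile ω q < ξ}).toReal
      ≤ (Measure.pi fun _ : Fin n ↦ μ).real {ω | q * n ≤ ∑ i, (Set.Iic ξ).indicator 1 (ω i)} :=
        measureReal_mono fun ω hω ↦ by
          simpa [hcount] using le_card_filter_of_empQuantile_lt hq hω
    _ ≤ exp (-t * (q * n)) * mgf ((Set.Iic ξ).indicator 1) μ t ^ n := by
        simpa using measureReal_le_sum_pi_le (ι := Fin n) μ hf (q * n) ht
          (integrable_exp_mul_of_mem_Icc hf.aemeasurable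
            (ae_of_all _ (Set.Iic ξ).indicator_one_mem_Icc))
    _ ≤ exp (-t * (q * n)) * exp s ^ n := by gcongr; exact mgf_nonneg
    _ = exp (n * (s - t * q)) := by rw [← exp_nat_mul, ← exp_add]; ring_nf

theorem stmt12 (μ : Measure ℝ) [IsProbabilityMeasure μ]
    (n : ℕ) (q : ℝ) (hq0 : 0 < q) (hq1 : q < 1)
    (ξ : ℝ) (hξ : ξ < quantile μ q)
    (δ₂ : ℝ) (hδ₂ : δ₂ = q - distFun μ ξ) :
    ((Measure.pi fun _ : Fin n => μ) {ω | empQuantile ω q < ξ}).toReal ≤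
        Real.exp (-2 * n * δ₂ ^ 2) ∧
    ((Measure.pi fun _ : Fin n => μ) {ω | empQuantile ω q < ξ}).toReal ≤
        Real.exp (-(n * δ₂ ^ 2) / (2 * distFun μ ξ + 2 / 3 * δ₂)) ∧
    ((Measure.pi fun _ : Fin n => μ) {ω | empQuantile ω q < ξ}).toReal ≤
        Real.exp (-(n * δ₂ ^ 2) / (2 * (1 - distFun μ ξ))) := by
  set p := distFun μ ξ
  have hp0 : 0 ≤ p := ENNReal.toReal_nonneg
  have hδ : 0 < δ₂ := by linarith [distFun_lt_of_lt_quantile μ hq0 hξ]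
  have hq : q = p + δ₂ := by linarith
  have hmgf (t : ℝ) : mgf ((Set.Iic ξ).indicator 1) μ t = 1 + p * (exp t - 1) :=
    mgf_indicator_one μ measurableSet_Iic t
  refine ⟨?_, ?_, ?_⟩
  · have hhoeffding := mgf_indicator_one_le_exp μ (s := Set.Iic ξ) measurableSet_Iic (4 * δ₂)
    refine (measureReal_empQuantile_lt_le_exp μ n hq1.le (by positivity) hhoeffding).trans_eq ?_
    rw [show μ.real (Set.Iic ξ) = p from rfl, hq]
    congr 1
    ring
  · obtain ⟨t, ht⟩ : ∃ t, t * (3 * p + δ₂) = 3 * δ₂ :=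
      ⟨3 * δ₂ / (3 * p + δ₂), div_mul_cancel₀ _ (by positivity)⟩
    have hpoisson : mgf ((Set.Iic ξ).indicator 1) μ t ≤ exp (p * (exp t - 1)) := by
      linarith [hmgf t, add_one_le_exp (p * (exp t - 1))]
    refine (measureReal_empQuantile_lt_le_exp μ n hq1.le (by nlinarith) hpoisson).trans ?_
    rw [show -(n * δ₂ ^ 2) / (2 * p + 2 / 3 * δ₂) = n * (-δ₂ ^ 2 / (2 * p + 2 / 3 * δ₂)) by ring,
      hq]
    gcongr
    exact mul_exp_sub_one_sub_le hp0 hδ ht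
  · have h1p : 0 < 1 - p := by linarith
    have ht : 0 ≤ δ₂ / (1 - p) := by positivity
    have hmgf_le := (hmgf _).trans_le (one_add_mul_exp_sub_one_le (by linarith) ht)
    refine (measureReal_empQuantile_lt_le_exp μ n hq1.le ht hmgf_le).trans_eq ?_
    rw [hq]
    congr 1
    field_simp
    ring
end

section
/- Let X be a real random variable with finite essential infimum X₋ = ess inf X and essential supremum X₊ = ess sup X, and essential diameter D = X₊ − X₋. Then for every ε > 0, the tail function satisfies τ^X(ε) ≥ min( 𝔽(X₋ + (ε/(2(1+ε)))·D), 1 − 𝔽(X₊ − (ε/(2(1+ε)))·D) ), where 𝔽 is the distribution function of X. -/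
open MeasureTheory Real

/-- The essential diameter `D = ess sup X - ess inf X` of a law `μ` on `ℝ`. -/
noncomputable def essDiam (μ : MeasureTheory.Measure ℝ) : ℝ :=
  essSup id μ - essInf id μ

/-- The tail function `τ^X(ε) = sup {t : ξ_{1-t} - ξ_t ≥ D/(1+ε)}`. -/
noncomputable def tailFun (μ : MeasureTheory.Measure ℝ) (ε : ℝ) : ℝ :=
  sSup {t : ℝ | essDiam μ / (1 + ε) ≤ quantile μ (1 - t) - quantile μ t}

/-!
Write `m`, `M` for the essential infimum and supremum, `D = M - m` and
`r = ε D / (2 (1 + ε))`, so that `(M - r) - (m + r) = D / (1 + ε)`. If `0 < t` is below both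
`𝔽(m + r)` and `1 - 𝔽(M - r)`, then `ξ_t ≤ m + r` and `ξ_{1-t} ≥ M - r`, so `t` lies in the set
defining `τ^X(ε)`. Hence that set contains the interval `(0, t₀)`, `t₀` being the minimum in
the statement. When `D = 0` both sides vanish, because of the junk values of `quantile`
outside `[0, 1]`.
-/

open Filter Set

theorem le_csSup_of_Ioo_subset {S : Set ℝ} {a b : ℝ} (hS : BddAbove S) (hab : a ≤ b)
    (ha : a ≤ sSup S) (h : Ioo a b ⊆ S) : b ≤ sSup S := by
  rcases hab.eq_or_lt with rfl | hab
  · exact ha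
  · rw [← csSup_Ioo hab]
    exact csSup_le_csSup hS (nonempty_Ioo.2 hab) h

section DistributionFunction

variable {μ : Measure ℝ} {ξ q : ℝ}

theorem distFun_nonneg (μ : Measure ℝ) (ξ : ℝ) : 0 ≤ distFun μ ξ :=
  ENNReal.toReal_nonneg

theorem distFun_mono [IsFiniteMeasure μ] : Monotone (distFun μ) := fun _ _ hab =>
  ENNReal.toReal_mono (measure_ne_top μ _) (measure_mono (Iic_subset_Iic.2 hab))

theorem distFun_le_one [IsProbabilityMeasure μ] (ξ : ℝ) : distFun μ ξ ≤ 1 :=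
  ENNReal.toReal_le_of_le_ofReal zero_le_one (by simpa using prob_le_one)

theorem distFun_eq_zero_of_lt_essInf (hb : IsBoundedUnder (· ≥ ·) (ae μ) id)
    (hξ : ξ < essInf id μ) : distFun μ ξ = 0 := by
  have hnull : μ {x | x < essInf id μ} = 0 := by
    simpa [ae_iff, not_le] using ae_essInf_le hb
  have hIic : μ (Iic ξ) = 0 := measure_mono_null (fun x hx => lt_of_le_of_lt hx hξ) hnull
  simp [distFun, hIic]

theorem distFun_eq_one_of_essSup_le [IsProbabilityMeasure μ]
    (hb : IsBoundedUnder (· ≤ ·) (ae μ) id) (hξ : essSup id μ ≤ ξ) : distFun μ ξ = 1 := by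
  have hnull : μ {x | essSup id μ < x} = 0 := by
    simpa [ae_iff, not_le] using ae_le_essSup hb
  have hcompl : μ (Iic ξ)ᶜ = 0 := by
    rw [compl_Iic]
    exact measure_mono_null (fun x hx => lt_of_le_of_lt hξ hx) hnull
  simp [distFun, (prob_compl_eq_zero_iff measurableSet_Iic).1 hcompl]

theorem quantile_of_neg (hq : q < 0) : quantile μ q = 0 := by
  have huniv : {ξ | q ≤ distFun μ ξ} = univ :=
    eq_univ_of_forall fun ξ => hq.le.trans (distFun_nonneg μ ξ)
  rw [quantile, huniv, Real.sInf_of_not_bddBelow not_bddBelow_univ]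

theorem quantile_of_one_lt [IsProbabilityMeasure μ] (hq : 1 < q) : quantile μ q = 0 := by
  have hempty : {ξ | q ≤ distFun μ ξ} = ∅ :=
    eq_empty_of_forall_notMem fun ξ hξ => (hq.trans_le hξ).not_ge (distFun_le_one ξ)
  rw [quantile, hempty, Real.sInf_empty]

theorem quantile_le_of_le_distFun (hb : IsBoundedUnder (· ≥ ·) (ae μ) id) (hq : 0 < q)
    (hξ : q ≤ distFun μ ξ) : quantile μ q ≤ ξ := by
  refine csInf_le ⟨essInf id μ, fun η hη => not_lt.1 fun hlt => ?_⟩ hξ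
  have hη' : q ≤ distFun μ η := hη
  rw [distFun_eq_zero_of_lt_essInf hb hlt] at hη'
  exact hq.not_ge hη'

theorem le_quantile_of_distFun_lt [IsProbabilityMeasure μ]
    (hb : IsBoundedUnder (· ≤ ·) (ae μ) id) (hq : q ≤ 1) (hξ : distFun μ ξ < q) :
    ξ ≤ quantile μ q := by
  refine le_csInf ⟨essSup id μ, ?_⟩ fun η hη => (distFun_mono.reflect_lt (hξ.trans_le hη)).le
  show q ≤ distFun μ (essSup id μ)
  rw [distFun_eq_one_of_essSup_le hb le_rfl]
  exact hq

end DistributionFunction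

section TailFunction

variable {μ : Measure ℝ} {ε : ℝ}

def tailSet (μ : Measure ℝ) (ε : ℝ) : Set ℝ :=
  {t | essDiam μ / (1 + ε) ≤ quantile μ (1 - t) - quantile μ t}

theorem mem_tailSet {t : ℝ} :
    t ∈ tailSet μ ε ↔ essDiam μ / (1 + ε) ≤ quantile μ (1 - t) - quantile μ t :=
  Iff.rfl

theorem tailFun_eq_sSup_tailSet : tailFun μ ε = sSup (tailSet μ ε) := rfl

theorem mem_tailSet_of_one_lt [IsProbabilityMeasure μ] (hD : essDiam μ / (1 + ε) ≤ 0)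
    {t : ℝ} (ht : 1 < t) : t ∈ tailSet μ ε := by
  rw [mem_tailSet, quantile_of_neg (by linarith), quantile_of_one_lt ht, sub_zero]
  exact hD

theorem tailFun_of_essDiam_nonpos [IsProbabilityMeasure μ] (hD : essDiam μ ≤ 0)
    (hε : 0 < 1 + ε) : tailFun μ ε = 0 := by
  refine Real.sSup_of_not_bddAbove fun ⟨b, hb⟩ => ?_
  have hmem : max 2 (b + 1) ∈ tailSet μ ε :=
    mem_tailSet_of_one_lt (div_nonpos_of_nonpos_of_nonneg hD hε.le)
      (one_lt_two.trans_le (le_max_left _ _))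
  linarith [hb hmem, le_max_right 2 (b + 1)]

theorem tailSet_subset_Icc [IsProbabilityMeasure μ] (hD : 0 < essDiam μ) (hε : 0 < 1 + ε) :
    tailSet μ ε ⊆ Icc 0 1 := by
  intro t ht
  rw [mem_tailSet] at ht
  have hpos : 0 < essDiam μ / (1 + ε) := div_pos hD hε
  constructor
  · by_contra! hneg
    rw [quantile_of_neg hneg, quantile_of_one_lt (by linarith)] at ht
    linarith
  · by_contra! hgt
    rw [quantile_of_neg (by linarith), quantile_of_one_lt hgt] at ht
    linarith

theorem mem_tailSet_of_lt_distFun [IsProbabilityMeasure μ]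
    (hbU : IsBoundedUnder (· ≤ ·) (ae μ) id) (hbL : IsBoundedUnder (· ≥ ·) (ae μ) id)
    (hε : 0 < 1 + ε) {t : ℝ} (ht : 0 < t)
    (hlow : t < distFun μ (essInf id μ + ε / (2 * (1 + ε)) * essDiam μ))
    (hupp : t < 1 - distFun μ (essSup id μ - ε / (2 * (1 + ε)) * essDiam μ)) :
    t ∈ tailSet μ ε := by
  have hq_low := quantile_le_of_le_distFun hbL ht hlow.le
  have hq_upp := le_quantile_of_distFun_lt hbU (by linarith) (by linarith : _ < 1 - t)
  have hgap : (essSup id μ - ε / (2 * (1 + ε)) * essDiam μ) -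
      (essInf id μ + ε / (2 * (1 + ε)) * essDiam μ) = essDiam μ / (1 + ε) := by
    rw [essDiam]
    field_simp
    ring
  rw [mem_tailSet]
  linarith

end TailFunction

theorem stmt15 (μ : Measure ℝ) [IsProbabilityMeasure μ]
    (C : ℝ) (hbdd : ∀ᵐ x ∂μ, |x| ≤ C)
    (ε : ℝ) (hε : 0 < ε) :
    min (distFun μ (essInf id μ + ε / (2 * (1 + ε)) * essDiam μ))
        (1 - distFun μ (essSup id μ - ε / (2 * (1 + ε)) * essDiam μ)) ≤
      tailFun μ ε := by
  have hε1 : 0 < 1 + ε := by linarith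
  have hbU : IsBoundedUnder (· ≤ ·) (ae μ) id :=
    ⟨C, by filter_upwards [hbdd] with x hx using (abs_le.1 hx).2⟩
  have hbL : IsBoundedUnder (· ≥ ·) (ae μ) id :=
    ⟨-C, by filter_upwards [hbdd] with x hx using (abs_le.1 hx).1⟩
  rcases le_or_gt (essDiam μ) 0 with hD | hD
  · have hr : ε / (2 * (1 + ε)) * essDiam μ ≤ 0 :=
      mul_nonpos_of_nonneg_of_nonpos (by positivity) hD
    have hF : distFun μ (essSup id μ - ε / (2 * (1 + ε)) * essDiam μ) = 1 :=
      distFun_eq_one_of_essSup_le hbU (by linarith)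
    rw [tailFun_of_essDiam_nonpos hD hε1, hF, sub_self]
    exact min_le_right _ _
  · have hIcc := tailSet_subset_Icc hD hε1
    rw [tailFun_eq_sSup_tailSet]
    refine le_csSup_of_Ioo_subset ⟨1, fun t ht => (hIcc ht).2⟩
      (le_min (distFun_nonneg _ _) (sub_nonneg.2 (distFun_le_one _)))
      (Real.sSup_nonneg fun t ht => (hIcc ht).1) fun t ⟨ht0, ht⟩ => ?_
    exact mem_tailSet_of_lt_distFun hbU hbL hε1 ht0 (lt_min_iff.1 ht).1 (lt_min_iff.1 ht).2
end
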